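/- arXiv:1610.07369 — 3 statements merged into one kernel-verified Lean document; each statement's English description precedes it below -/
import Mathlib

section
/- (Szulkin's Lemma) Let E be a Banach space and χ: E → (-∞, +∞] a lower semicontinuous convex function with χ(0) = 0. If χ(x) ≥ -‖x‖ for all x ∈ E, then there exists z ∈ E* with ‖z‖_* ≤ 1 such that χ(x) ≥ ⟨z, x⟩ for all x ∈ E. -/
open Filter

theorem szulkin_lemma {E : Type*} [NormedAddCommGroup E] [NormedSpace ℝ E] [CompleteSpace E]
    (χ : E → EReal) (hlsc : LowerSemicontinuous χ)
    (hconv : ∀ x y : E, ∀ a b : ℝ, 0 ≤ a → 0 ≤ b → a + b = 1 →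
      χ (a • x + b • y) ≤ (a : EReal) * χ x + (b : EReal) * χ y)
    (h0 : χ 0 = 0)
    (hbd : ∀ x : E, ((-‖x‖ : ℝ) : EReal) ≤ χ x) :
    ∃ z : E →L[ℝ] ℝ, ‖z‖ ≤ 1 ∧ ∀ x : E, ((z x : ℝ) : EReal) ≤ χ x := by
  -- the open convex set below the cone, and the epigraph of χ
  set s : Set (E × ℝ) := {p | p.2 + ‖p.1‖ < 0} with hs_def
  set C : Set (E × ℝ) := {p | χ p.1 ≤ (p.2 : EReal)} with hC_def
  have hs_open : IsOpen s := by
    have : Continuous fun p : E × ℝ => p.2 + ‖p.1‖ :=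
      continuous_snd.add (continuous_fst.norm)
    exact isOpen_lt this continuous_const
  have hs_conv : Convex ℝ s := by
    intro p hp q hq a b ha hb hab
    simp only [hs_def, Set.mem_setOf_eq] at hp hq ⊢
    have h1 : ‖a • p.1 + b • q.1‖ ≤ a * ‖p.1‖ + b * ‖q.1‖ := by
      calc ‖a • p.1 + b • q.1‖ ≤ ‖a • p.1‖ + ‖b • q.1‖ := norm_add_le _ _
      _ = a * ‖p.1‖ + b * ‖q.1‖ := by
          rw [norm_smul, norm_smul, Real.norm_eq_abs, Real.norm_eq_abs,
            abs_of_nonneg ha, abs_of_nonneg hb]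
    have h2 : a * p.2 + b * q.2 + (a * ‖p.1‖ + b * ‖q.1‖)
        = a * (p.2 + ‖p.1‖) + b * (q.2 + ‖q.1‖) := by ring
    have h3 : a * (p.2 + ‖p.1‖) + b * (q.2 + ‖q.1‖) < 0 := by
      rcases eq_or_lt_of_le ha with rfl | ha'
      · simp only [not_lt, zero_mul, zero_add] at *
        have hb1 : b = 1 := by linarith
        rw [hb1]; linarith
      · have hbq : b * (q.2 + ‖q.1‖) ≤ 0 :=
          mul_nonpos_of_nonneg_of_nonpos hb (le_of_lt hq)
        have hap : a * (p.2 + ‖p.1‖) < 0 := mul_neg_of_pos_of_neg ha' hp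
        linarith
    show (a • p + b • q).2 + ‖(a • p + b • q).1‖ < 0
    simp only [Prod.smul_fst, Prod.smul_snd, Prod.fst_add, Prod.snd_add, smul_eq_mul]
    linarith
  have hC_conv : Convex ℝ C := by
    intro p hp q hq a b ha hb hab
    simp only [hC_def, Set.mem_setOf_eq] at hp hq ⊢
    have := hconv p.1 q.1 a b ha hb hab
    refine this.trans ?_
    have h1 : (a : EReal) * χ p.1 ≤ (a : EReal) * (p.2 : EReal) :=
      mul_le_mul_of_nonneg_left hp (by exact_mod_cast ha)
    have h2 : (b : EReal) * χ q.1 ≤ (b : EReal) * (q.2 : EReal) :=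
      mul_le_mul_of_nonneg_left hq (by exact_mod_cast hb)
    calc (a : EReal) * χ p.1 + (b : EReal) * χ q.1
        ≤ (a : EReal) * (p.2 : EReal) + (b : EReal) * (q.2 : EReal) := add_le_add h1 h2
      _ = (((a • p + b • q).2 : ℝ) : EReal) := by
          simp only [Prod.smul_snd, Prod.snd_add, smul_eq_mul]
          rw [← EReal.coe_mul, ← EReal.coe_mul, ← EReal.coe_add]
  have hdisj : Disjoint s C := by
    rw [Set.disjoint_left]
    intro p hp hpC
    simp only [hs_def, Set.mem_setOf_eq] at hp
    simp only [hC_def, Set.mem_setOf_eq] at hpC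
    have h1 : ((-‖p.1‖ : ℝ) : EReal) ≤ (p.2 : EReal) := (hbd p.1).trans hpC
    rw [EReal.coe_le_coe_iff] at h1
    linarith
  obtain ⟨f, u, hfs, hfC⟩ := geometric_hahn_banach_open hs_conv hs_open hC_conv hdisj
  -- decompose f
  set g : E →L[ℝ] ℝ := f.comp (ContinuousLinearMap.inl ℝ E ℝ) with hg_def
  set c : ℝ := f (0, 1) with hc_def
  have hdecomp : ∀ y : E, ∀ t : ℝ, f (y, t) = g y + t * c := by
    intro y t
    have : (y, t) = (y, (0 : ℝ)) + t • ((0 : E), (1 : ℝ)) := by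
      simp [Prod.ext_iff]
    rw [this, map_add, map_smul]
    simp [hg_def, hc_def, ContinuousLinearMap.inl_apply]
  have hg0 : g 0 = 0 := by simp
  -- from C side: (0,0) ∈ C
  have hu_le : u ≤ 0 := by
    have h00 : ((0 : E), (0 : ℝ)) ∈ C := by
      simp only [hC_def, Set.mem_setOf_eq, h0]; norm_num
    have := hfC _ h00
    rw [hdecomp 0 0, hg0] at this
    linarith
  -- c > 0
  have hAc : ∀ y : E, ∀ t : ℝ, t + ‖y‖ < 0 → g y + t * c < u := by
    intro y t ht
    have : (y, t) ∈ s := ht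
    have := hfs _ this
    rwa [hdecomp y t] at this
  have hc_pos : 0 < c := by
    have h := hAc 0 (-1) (by simp)
    rw [hg0] at h
    nlinarith
  -- u = 0
  have hu0 : u = 0 := by
    by_contra h
    have hu_neg : u < 0 := lt_of_le_of_ne hu_le h
    have ht : u / (2 * c) + ‖(0 : E)‖ < 0 := by
      simp only [norm_zero, add_zero]
      exact div_neg_of_neg_of_pos hu_neg (by linarith)
    have h2 := hAc 0 (u / (2 * c)) ht
    rw [hg0, zero_add] at h2
    have hc0 : c ≠ 0 := ne_of_gt hc_pos
    have h3 : u / (2 * c) * c = u / 2 := by field_simp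
    rw [h3] at h2
    linarith
  set z : E →L[ℝ] ℝ := (-c⁻¹) • g with hz_def
  -- z y ≤ r whenever χ y ≤ r
  have hzle : ∀ y : E, ∀ r : ℝ, χ y ≤ (r : EReal) → z y ≤ r := by
    intro y r hyr
    have hyC : (y, r) ∈ C := hyr
    have := hfC _ hyC
    rw [hdecomp y r, hu0] at this
    have h1 : -g y ≤ r * c := by linarith
    simp only [hz_def, ContinuousLinearMap.smul_apply, smul_eq_mul]
    rw [← div_le_iff₀ hc_pos] at h1
    calc -c⁻¹ * g y = -g y / c := by ring
    _ ≤ r := h1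
  -- lower bound: -‖y‖ ≤ z y
  have hzge : ∀ y : E, -‖y‖ ≤ z y := by
    intro y
    refine le_of_forall_lt fun t ht => ?_
    have h := hAc y t (by linarith)
    rw [hu0] at h
    have h1 : t * c < -g y := by linarith
    have h2 : t < -g y / c := (lt_div_iff₀ hc_pos).mpr h1
    simp only [hz_def, ContinuousLinearMap.smul_apply, smul_eq_mul]
    calc t < -g y / c := h2
    _ = -c⁻¹ * g y := by ring
  refine ⟨z, ?_, ?_⟩
  · refine ContinuousLinearMap.opNorm_le_bound z zero_le_one fun y => ?_
    rw [one_mul, Real.norm_eq_abs, abs_le]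
    constructor
    · exact hzge y
    · have := hzge (-y)
      rw [map_neg, norm_neg] at this
      linarith
  · intro x
    by_cases hx : χ x = ⊤
    · rw [hx]; exact le_top
    · have hxbot : χ x ≠ ⊥ := by
        intro hb
        have := hbd x
        rw [hb] at this
        exact absurd this (by simp)
      have hxr : χ x = ((χ x).toReal : EReal) := (EReal.coe_toReal hx hxbot).symm
      rw [hxr, EReal.coe_le_coe_iff]
      exact hzle x _ (le_of_eq hxr)
end

section
/- Let E be a Banach space, I ∈ C¹(E, ℝ), I₀: E → ℝ locally Lipschitz and convex, and x ∈ E, ε > 0. Then the following are equivalent: (a) I₀(y) - I₀(x) ≥ I'(x)(y - x) - ε‖y - x‖ for all y ∈ E; (b) there exists z ∈ E* with ‖z‖_* ≤ ε such that I₀(y) - I₀(x) ≥ I'(x)(y - x) + ⟨z, y - x⟩ for all y ∈ E. -/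
/-!
The function `g y = I₀ x + I' (y - x) - ε‖y - x‖` is concave and continuous, and (a) says
`g ≤ I₀`. Separating the open convex strict hypograph of `g` from the convex epigraph of `I₀`
by Hahn–Banach gives a continuous affine function `φ + a` squeezed between them. It touches `I₀`
at `x`, so `z = φ - I'` satisfies (b), and `g ≤ φ + a` forces `z ≥ -ε‖·‖`, i.e. `‖z‖ ≤ ε`.
-/

open Set

theorem ContinuousLinearMap.norm_le_iff_forall_neg_mul_norm_le {E : Type*}
    [SeminormedAddCommGroup E] [NormedSpace ℝ E] {z : StrongDual ℝ E} {ε : ℝ} (hε : 0 ≤ ε) :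
    ‖z‖ ≤ ε ↔ ∀ w, -(ε * ‖w‖) ≤ z w := by
  refine ⟨fun hz w => ?_, fun h => z.opNorm_le_bound hε fun w => ?_⟩
  · calc -(ε * ‖w‖) ≤ -(‖z‖ * ‖w‖) := by gcongr
      _ ≤ -‖z w‖ := neg_le_neg (z.le_opNorm w)
      _ ≤ z w := neg_le_of_abs_le le_rfl
  · have := h (-w)
    rw [map_neg, norm_neg] at this
    rw [Real.norm_eq_abs, abs_le]
    exact ⟨h w, by linarith⟩

theorem ConvexOn.exists_affine_between {E : Type*} [TopologicalSpace E] [AddCommGroup E]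
    [Module ℝ E] [IsTopologicalAddGroup E] [ContinuousSMul ℝ E] {f g : E → ℝ}
    (hf : ConvexOn ℝ univ f) (hg : ConcaveOn ℝ univ g) (hg_lsc : LowerSemicontinuous g)
    (hgf : g ≤ f) : ∃ (φ : StrongDual ℝ E) (a : ℝ), ∀ w, g w ≤ φ w + a ∧ φ w + a ≤ f w := by
  have hdisj : Disjoint {p : E × ℝ | p.2 < g p.1} {p | f p.1 ≤ p.2} :=
    disjoint_left.2 fun p hlt hle => (hlt.trans_le (hgf p.1)).not_ge hle
  have hopen : IsOpen {p : E × ℝ | p.2 < g p.1} := by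
    simpa only [compl_ofPred, not_le] using hg_lsc.isClosed_epigraph.isOpen_compl
  obtain ⟨L, u, hlt, hle⟩ := geometric_hahn_banach_open
    (by simpa using hg.convex_strict_hypograph) hopen (by simpa using hf.convex_epigraph) hdisj
  set c := L (0, 1)
  have hL : ∀ w t, L (w, t) = L (w, 0) + t * c := fun w t => by
    rw [← smul_eq_mul, ← map_smul, ← map_add, Prod.smul_mk, smul_zero, smul_eq_mul, mul_one,
      Prod.mk_add_mk, add_zero, zero_add]
  -- `L` is not vertical: compare `(0, g 0 - 1)` below `g` with `(0, f 0)` above `f`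
  have hc : 0 < c := by
    have h₁ := hlt (0, g 0 - 1) (by simp)
    have h₂ := hle (0, f 0) (by simp)
    rw [hL] at h₁ h₂
    nlinarith [hgf 0]
  have hφ : ∀ w, (-c⁻¹ • L.comp (.inl ℝ E ℝ)) w + u / c = (u - L (w, 0)) / c := fun w => by
    simp only [smul_apply, ContinuousLinearMap.comp_apply,
      ContinuousLinearMap.inl_apply, smul_eq_mul]
    field_simp
    ring
  refine ⟨-c⁻¹ • L.comp (.inl ℝ E ℝ), u / c, fun w => ⟨?_, ?_⟩⟩
  · rw [hφ]
    refine le_of_forall_lt fun t ht => ?_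
    have := hlt (w, t) ht
    rw [hL] at this
    rw [lt_div_iff₀ hc]
    linarith
  · have := hle (w, f w) (le_refl (f w))
    rw [hL] at this
    rw [hφ, div_le_iff₀ hc]
    linarith

theorem epsilon_subdifferential_equiv_general {E : Type*} [NormedAddCommGroup E] [NormedSpace ℝ E]
    (I₀ : E → ℝ) (hconv : ConvexOn ℝ Set.univ I₀)
    (x : E) (I' : E →L[ℝ] ℝ)
    (ε : ℝ) (hε : 0 < ε) :
    (∀ y : E, I₀ y - I₀ x ≥ I' (y - x) - ε * ‖y - x‖) ↔
      (∃ z : E →L[ℝ] ℝ, ‖z‖ ≤ ε ∧ ∀ y : E, I₀ y - I₀ x ≥ I' (y - x) + z (y - x)) := by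
  refine ⟨fun ha => ?_, fun ⟨z, hz, hb⟩ y => ?_⟩
  · set g : E → ℝ := fun y => I₀ x + I' (y - x) - ε * ‖y - x‖
    have hg : ConcaveOn ℝ univ g := by
      refine (((concaveOn_const (I₀ x - I' x) convex_univ).add
        (I'.toLinearMap.concaveOn convex_univ)).sub
        ((convexOn_univ_dist x).smul hε.le)).congr fun y _ => ?_
      simp only [g, Pi.add_apply, Pi.sub_apply, ContinuousLinearMap.coe_coe, map_sub,
        dist_eq_norm, smul_eq_mul]
      ring
    obtain ⟨φ, a, hφ⟩ := hconv.exists_affine_between hg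
      (by fun_prop : Continuous g).lowerSemicontinuous fun y => by linarith [ha y]
    have hφx : φ x + a = I₀ x := le_antisymm (hφ x).2 (by simpa [g] using (hφ x).1)
    refine ⟨φ - I', (ContinuousLinearMap.norm_le_iff_forall_neg_mul_norm_le hε.le).2 fun w => ?_,
      fun y => ?_⟩
    · have := (hφ (x + w)).1
      simp only [g, add_sub_cancel_left, map_add] at this
      simp only [sub_apply]
      linarith
    · have := (hφ y).2
      simp only [sub_apply, map_sub]
      linarith
  · linarith [hb y, (ContinuousLinearMap.norm_le_iff_forall_neg_mul_norm_le hε.le).1 hz (y - x)]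

theorem epsilon_subdifferential_equiv {E : Type*} [NormedAddCommGroup E] [NormedSpace ℝ E]
    [CompleteSpace E]
    (I₀ : E → ℝ) (hconv : ConvexOn ℝ Set.univ I₀) (hlip : LocallyLipschitz I₀)
    (I : E → ℝ) (x : E) (I' : E →L[ℝ] ℝ) (hI : HasFDerivAt I I' x)
    (ε : ℝ) (hε : 0 < ε) :
    (∀ y : E, I₀ y - I₀ x ≥ I' (y - x) - ε * ‖y - x‖) ↔
      (∃ z : E →L[ℝ] ℝ, ‖z‖ ≤ ε ∧ ∀ y : E, I₀ y - I₀ x ≥ I' (y - x) + z (y - x)) :=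
  epsilon_subdifferential_equiv_general I₀ hconv x I' ε hε
end

section
/- Let (u_n) ⊂ BV(ℝ^N) satisfy Φ(u_n) → c and 𝒥(v) - 𝒥(u_n) ≥ ∫ f(u_n)(v - u_n)dx - ε_n‖v - u_n‖ for all v ∈ BV(ℝ^N), with ε_n → 0, where Φ(u) = 𝒥(u) - ∫F(u)dx, 𝒥(u) = ∫|Du| + ∫|u|dx, and f satisfies the Ambrosetti–Rabinowitz condition 0 < θF(s) ≤ f(s)s for s ≠ 0 with θ > 1. Then (u_n) is bounded in BV(ℝ^N). -/
open MeasureTheory Metric Set Filter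

noncomputable section

def divg {N : ℕ} (φ : EuclideanSpace ℝ (Fin N) → EuclideanSpace ℝ (Fin N))
    (x : EuclideanSpace ℝ (Fin N)) : ℝ :=
  ∑ i, fderiv ℝ (fun y => φ y i) x (EuclideanSpace.single i 1)

/-- The set of values `∫ u · div φ` over admissible test fields `φ`. -/
def divSet {N : ℕ} (u : EuclideanSpace ℝ (Fin N) → ℝ) : Set ℝ :=
  {r | ∃ φ : EuclideanSpace ℝ (Fin N) → EuclideanSpace ℝ (Fin N),
    ContDiff ℝ 1 φ ∧ HasCompactSupport φ ∧ (∀ x, ‖φ x‖ ≤ 1) ∧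
    r = ∫ x, u x * divg φ x}

/-- `u ∈ BV(ℝᴺ)`: integrable with finite total variation. -/
def IsBV {N : ℕ} (u : EuclideanSpace ℝ (Fin N) → ℝ) : Prop :=
  Integrable u ∧ BddAbove (divSet u)

/-- Total variation `∫ |Du|`. -/
def totalVar {N : ℕ} (u : EuclideanSpace ℝ (Fin N) → ℝ) : ℝ := sSup (divSet u)

/-- BV norm `∫|Du| + ∫|u|`. -/
def bvNorm {N : ℕ} (u : EuclideanSpace ℝ (Fin N) → ℝ) : ℝ :=
  totalVar u + ∫ x, |u x|

def IsRadial {N : ℕ} (u : EuclideanSpace ℝ (Fin N) → ℝ) : Prop :=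
  ∀ x y : EuclideanSpace ℝ (Fin N), ‖x‖ = ‖y‖ → u x = u y


/-!
Testing the variational inequality at `v = 2 u_n` and `v = 0` shows, by homogeneity of the BV
norm, that `∫ f(u_n) u_n` differs from `‖u_n‖` by at most `ε_n ‖u_n‖`. The Ambrosetti–Rabinowitz
condition bounds `θ ∫ F(u_n)` by `∫ f(u_n) u_n`, so `Φ(u_n) ≥ (1 - (1 + ε_n)/θ) ‖u_n‖`; as `Φ(u_n)`
is bounded and `ε_n → 0`, the norms are eventually bounded.
-/

open scoped Pointwise

section BVNorm

variable {N : ℕ}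

lemma divg_neg (φ : EuclideanSpace ℝ (Fin N) → EuclideanSpace ℝ (Fin N))
    (x : EuclideanSpace ℝ (Fin N)) : divg (-φ) x = -divg φ x := by
  simp only [divg, ← Finset.sum_neg_distrib]
  congr 1
  ext i
  have : (fun y => (-φ) y i) = -fun y => φ y i := by ext y; simp
  rw [this, fderiv_neg]
  rfl

lemma zero_mem_divSet (u : EuclideanSpace ℝ (Fin N) → ℝ) : (0 : ℝ) ∈ divSet u :=
  ⟨0, contDiff_const, HasCompactSupport.zero, fun _ => by simp, by simp [divg]⟩

lemma divSet_neg_subset (u : EuclideanSpace ℝ (Fin N) → ℝ) : divSet (-u) ⊆ divSet u := by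
  rintro r ⟨φ, hφ, hφc, hφ1, rfl⟩
  refine ⟨-φ, hφ.neg, hφc.neg, fun x => by simpa using hφ1 x, ?_⟩
  simp only [divg_neg, Pi.neg_apply, neg_mul, mul_neg]

lemma divSet_neg (u : EuclideanSpace ℝ (Fin N) → ℝ) : divSet (-u) = divSet u :=
  (divSet_neg_subset u).antisymm (by simpa using divSet_neg_subset (-u))

lemma divSet_smul (c : ℝ) (u : EuclideanSpace ℝ (Fin N) → ℝ) :
    divSet (c • u) = c • divSet u := by
  ext r
  simp only [divSet, Set.mem_smul_set, Set.mem_ofPred_eq, Pi.smul_apply, smul_eq_mul]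
  constructor
  · rintro ⟨φ, hφ, hφc, hφ1, rfl⟩
    refine ⟨_, ⟨φ, hφ, hφc, hφ1, rfl⟩, ?_⟩
    simp only [← integral_const_mul, mul_assoc]
  · rintro ⟨_, ⟨φ, hφ, hφc, hφ1, rfl⟩, rfl⟩
    refine ⟨φ, hφ, hφc, hφ1, ?_⟩
    simp only [← integral_const_mul, mul_assoc]

lemma totalVar_smul (c : ℝ) (u : EuclideanSpace ℝ (Fin N) → ℝ) :
    totalVar (c • u) = |c| * totalVar u := by
  have h_nonneg : ∀ c : ℝ, 0 ≤ c → ∀ u : EuclideanSpace ℝ (Fin N) → ℝ,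
      totalVar (c • u) = c * totalVar u := fun c hc u => by
    rw [totalVar, divSet_smul, Real.sSup_smul_of_nonneg hc]
    rfl
  rcases le_total 0 c with hc | hc
  · rw [h_nonneg c hc, abs_of_nonneg hc]
  · have : c • u = |c| • -u := by rw [abs_of_nonpos hc, smul_neg, neg_smul, neg_neg]
    rw [this, h_nonneg _ (abs_nonneg c), totalVar, totalVar, divSet_neg]

lemma bvNorm_smul (c : ℝ) (u : EuclideanSpace ℝ (Fin N) → ℝ) :
    bvNorm (c • u) = |c| * bvNorm u := by
  simp only [bvNorm, totalVar_smul, Pi.smul_apply, smul_eq_mul, abs_mul, integral_const_mul]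
  ring

lemma bvNorm_nonneg (u : EuclideanSpace ℝ (Fin N) → ℝ) : 0 ≤ bvNorm u :=
  add_nonneg (Real.sSup_nonneg' ⟨0, zero_mem_divSet u, le_rfl⟩)
    (integral_nonneg fun _ => abs_nonneg _)

lemma IsBV.smul_of_nonneg {u : EuclideanSpace ℝ (Fin N) → ℝ} (hu : IsBV u) {c : ℝ} (hc : 0 ≤ c) :
    IsBV (c • u) :=
  ⟨hu.1.smul c, by rw [divSet_smul]; exact hu.2.smul_of_nonneg hc⟩

lemma abs_integral_mul_self_sub_bvNorm_le {g : ℝ → ℝ} {u : EuclideanSpace ℝ (Fin N) → ℝ}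
    {ε : ℝ} (hu : IsBV u)
    (hineq : ∀ v : EuclideanSpace ℝ (Fin N) → ℝ, IsBV v →
      bvNorm v - bvNorm u ≥ (∫ x, g (u x) * (v x - u x)) - ε * bvNorm (v - u)) :
    |(∫ x, g (u x) * u x) - bvNorm u| ≤ ε * bvNorm u := by
  -- with `v = t • u` both sides of the inequality scale by `t - 1`
  have h_scaled : ∀ t : ℝ, 0 ≤ t → (t - 1) * ∫ x, g (u x) * u x
      ≤ (t - 1) * bvNorm u + ε * (|t - 1| * bvNorm u) := fun t ht => by
    have h := hineq (t • u) (hu.smul_of_nonneg ht)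
    have h_int : ∫ x, g (u x) * ((t • u) x - u x) = (t - 1) * ∫ x, g (u x) * u x := by
      rw [← integral_const_mul]
      congr 1 with x
      simp only [Pi.smul_apply, smul_eq_mul]
      ring
    rw [h_int, show t • u - u = (t - 1) • u by rw [sub_smul, one_smul], bvNorm_smul,
      bvNorm_smul, abs_of_nonneg ht] at h
    linarith
  have h_two := h_scaled 2 zero_le_two
  have h_zero := h_scaled 0 le_rfl
  norm_num at h_two h_zero
  rw [abs_le]
  constructor <;> linarith

end BVNorm

section AmbrosettiRabinowitz

variable {α : Type*} [MeasurableSpace α] {μ : Measure α}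

lemma le_of_ambrosettiRabinowitz {f F : ℝ → ℝ} {θ ε M J : ℝ} {u : α → ℝ} (hθ : 1 < θ)
    (hAR : ∀ s, θ * F s ≤ f s * s) (hε_half : ε ≤ 1 / 2) (hε_θ : ε ≤ (θ - 1) / 2)
    (hM : 0 ≤ M) (hJ : 0 ≤ J) (hΦ : J - ∫ x, F (u x) ∂μ ≤ M)
    (hcrit : |(∫ x, f (u x) * u x ∂μ) - J| ≤ ε * J) :
    J ≤ 2 * θ * M / (θ - 1) := by
  rw [le_div_iff₀ (by linarith)]
  obtain ⟨hcrit_lower, hcrit_upper⟩ := abs_le.1 hcrit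
  -- a non-integrable integrand has integral `0`, which the two hypotheses turn into the bound
  by_cases hfu : Integrable (fun x => f (u x) * u x) μ
  swap
  · rw [integral_undef hfu] at hcrit_lower
    have hJ0 : J = 0 := by nlinarith [mul_le_mul_of_nonneg_right hε_half hJ]
    rw [hJ0, zero_mul]
    positivity
  by_cases hFu : Integrable (fun x => F (u x)) μ
  swap
  · rw [integral_undef hFu] at hΦ
    nlinarith
  have h_int : θ * ∫ x, F (u x) ∂μ ≤ ∫ x, f (u x) * u x ∂μ := by
    rw [← integral_const_mul]
    exact integral_mono (hFu.const_mul θ) hfu fun x => hAR (u x)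
  nlinarith [mul_le_mul_of_nonneg_right hε_θ hJ]

end AmbrosettiRabinowitz

theorem mp_sequence_bounded_general {N : ℕ}
    (f F : ℝ → ℝ)
    (hFdef : ∀ s : ℝ, F s = ∫ t in (0 : ℝ)..s, f t)
    (θ : ℝ) (hθ : 1 < θ)
    (hAR : ∀ s : ℝ, s ≠ 0 → 0 < θ * F s ∧ θ * F s ≤ f s * s)
    (u : ℕ → EuclideanSpace ℝ (Fin N) → ℝ) (hbv : ∀ n, IsBV (u n))
    (ε : ℕ → ℝ) (hε : Tendsto ε atTop (nhds 0))
    (c : ℝ)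
    (hΦ : Tendsto (fun n => bvNorm (u n) - ∫ x, F (u n x)) atTop (nhds c))
    (hineq : ∀ n, ∀ v : EuclideanSpace ℝ (Fin N) → ℝ, IsBV v →
      bvNorm v - bvNorm (u n) ≥
        (∫ x, f (u n x) * (v x - u n x)) - ε n * bvNorm (v - u n)) :
    ∃ C : ℝ, ∀ n, bvNorm (u n) ≤ C := by
  have hF0 : F 0 = 0 := by simp [hFdef]
  have hAR_all : ∀ s, θ * F s ≤ f s * s := fun s => by
    rcases eq_or_ne s 0 with rfl | hs
    · simp [hF0]
    · exact (hAR s hs).2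
  have hM : 0 ≤ |c| + 1 := by positivity
  have hΦ_le := hΦ.eventually (ge_mem_nhds (by linarith [le_abs_self c] : c < |c| + 1))
  have hε_half := hε.eventually (ge_mem_nhds (by norm_num : (0 : ℝ) < 1 / 2))
  have hε_θ := hε.eventually (ge_mem_nhds (by linarith : (0 : ℝ) < (θ - 1) / 2))
  have h_bound : ∀ᶠ n in atTop, bvNorm (u n) ≤ 2 * θ * (|c| + 1) / (θ - 1) := by
    filter_upwards [hΦ_le, hε_half, hε_θ] with n hΦn hε_half_n hε_θ_n
    exact le_of_ambrosettiRabinowitz hθ hAR_all hε_half_n hε_θ_n hM (bvNorm_nonneg _) hΦn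
      (abs_integral_mul_self_sub_bvNorm_le (hbv n) (hineq n))
  obtain ⟨C, hC⟩ := (isBoundedUnder_of_eventually_le h_bound).bddAbove_range
  exact ⟨C, fun n => hC (mem_range_self n)⟩

theorem mp_sequence_bounded {N : ℕ} (hN : 2 ≤ N)
    (f F : ℝ → ℝ) (hf : Continuous f)
    (hFdef : ∀ s : ℝ, F s = ∫ t in (0 : ℝ)..s, f t)
    (θ : ℝ) (hθ : 1 < θ)
    (hAR : ∀ s : ℝ, s ≠ 0 → 0 < θ * F s ∧ θ * F s ≤ f s * s)
    (u : ℕ → EuclideanSpace ℝ (Fin N) → ℝ) (hbv : ∀ n, IsBV (u n))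
    (ε : ℕ → ℝ) (hεpos : ∀ n, 0 ≤ ε n) (hε : Tendsto ε atTop (nhds 0))
    (c : ℝ)
    (hΦ : Tendsto (fun n => bvNorm (u n) - ∫ x, F (u n x)) atTop (nhds c))
    (hineq : ∀ n, ∀ v : EuclideanSpace ℝ (Fin N) → ℝ, IsBV v →
      bvNorm v - bvNorm (u n) ≥
        (∫ x, f (u n x) * (v x - u n x)) - ε n * bvNorm (v - u n)) :
    ∃ C : ℝ, ∀ n, bvNorm (u n) ≤ C :=
  mp_sequence_bounded_general f F hFdef θ hθ hAR u hbv ε hε c hΦ hineq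
end
end
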